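/- arXiv:1901.06309 — 10 statements merged into one kernel-verified Lean document; each statement's English description precedes it below -/
import Mathlib

section
/- Let g : [0,∞) → ℝ be continuously differentiable and solve the HJB equation. Then g'(x) ≥ 1 for all x ≥ 0 (in particular g is strictly increasing), and g(x) ≥ c/(λ+δ) > 0 for all x ≥ 0. -/
open Real Set MeasureTheory

/-!
The variational inequality `1 - g' ≤ 0` is the claim `g' ≥ 1`, which makes `g` strictly
increasing. At `x = 0` the claim integral runs over the empty set `(0, 0]`, and the funding
supremum is nonnegative (take `f = 0`), so the HJB inequality leaves
`(λ + δ) g(0) ≥ c g'(0) ≥ c`; monotonicity carries this bound to every `x ≥ 0`.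
-/

theorem strictMonoOn_of_derivWithin_pos {D : Set ℝ} (hD : Convex ℝ D) {f : ℝ → ℝ}
    (hf : ContinuousOn f D) (hf' : ∀ x ∈ interior D, 0 < derivWithin f D x) :
    StrictMonoOn f D :=
  strictMonoOn_of_deriv_pos hD hf fun x hx ↦ by
    rw [← derivWithin_of_mem_nhds (mem_interior_iff_mem_nhds.mp hx)]
    exact hf' x hx

theorem sSup_funding_gain_nonneg (g : ℝ → ℝ) (φ x : ℝ) :
    0 ≤ sSup {z : ℝ | ∃ f ≥ (0:ℝ), z = g (x + f) - g x - φ * f} :=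
  Real.sSup_nonneg' ⟨0, ⟨0, le_rfl, by simp⟩, le_rfl⟩

theorem hjb_solution_monotone_and_bounded_below_general
    (c lam δ β φ : ℝ) (hc : 0 < c) (hlam : 0 < lam) (hδ : 0 < δ)
    (hβ : 0 ≤ β)
    (μ : Measure ℝ)
    (g : ℝ → ℝ) (hg : ContDiffOn ℝ 1 g (Set.Ici 0))
    (hHJB : ∀ x ≥ (0:ℝ),
      (1 - derivWithin g (Set.Ici 0) x ≤ 0 ∧
        c * derivWithin g (Set.Ici 0) x - (lam + δ) * g x
          + lam * ∫ y in Set.Ioc 0 x, g (x - y) ∂μ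
          + β * sSup {z : ℝ | ∃ f ≥ (0:ℝ), z = g (x + f) - g x - φ * f} ≤ 0) ∧
      (1 - derivWithin g (Set.Ici 0) x = 0 ∨
        c * derivWithin g (Set.Ici 0) x - (lam + δ) * g x
          + lam * ∫ y in Set.Ioc 0 x, g (x - y) ∂μ
          + β * sSup {z : ℝ | ∃ f ≥ (0:ℝ), z = g (x + f) - g x - φ * f} = 0)) :
    (∀ x ≥ (0:ℝ), 1 ≤ derivWithin g (Set.Ici 0) x) ∧
    StrictMonoOn g (Set.Ici 0) ∧
    (∀ x ≥ (0:ℝ), c / (lam + δ) ≤ g x) ∧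
    0 < c / (lam + δ) := by
  have hderiv : ∀ x ≥ (0:ℝ), 1 ≤ derivWithin g (Ici 0) x := fun x hx ↦ by
    linarith [(hHJB x hx).1.1]
  have hmono : StrictMonoOn g (Ici 0) :=
    strictMonoOn_of_derivWithin_pos (convex_Ici 0) hg.continuousOn fun x hx ↦ by
      rw [interior_Ici] at hx
      linarith [hderiv x (le_of_lt hx)]
  have hrate : 0 < lam + δ := by positivity
  have hg0 : c / (lam + δ) ≤ g 0 := by
    have h0 := (hHJB 0 le_rfl).1.2
    rw [Ioc_self, Measure.restrict_empty, integral_zero_measure, mul_zero, add_zero] at h0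
    rw [div_le_iff₀ hrate]
    nlinarith [hderiv 0 le_rfl, mul_nonneg hβ (sSup_funding_gain_nonneg g φ 0)]
  refine ⟨hderiv, hmono, fun x hx ↦ ?_, div_pos hc hrate⟩
  exact hg0.trans (hmono.monotoneOn self_mem_Ici (mem_Ici.mpr hx) hx)

/-- Any continuously differentiable solution `g` of the HJB equation
satisfies `g' ≥ 1` (hence is strictly increasing) and is bounded below by
`c / (λ + δ) > 0`. -/
theorem hjb_solution_monotone_and_bounded_below
    (c lam δ β φ : ℝ) (hc : 0 < c) (hlam : 0 < lam) (hδ : 0 < δ)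
    (hβ : 0 ≤ β) (hφ : 1 ≤ φ)
    (μ : Measure ℝ) [IsProbabilityMeasure μ] (hμ : μ (Set.Iic 0) = 0)
    (g : ℝ → ℝ) (hg : ContDiffOn ℝ 1 g (Set.Ici 0))
    (hHJB : ∀ x ≥ (0:ℝ),
      (1 - derivWithin g (Set.Ici 0) x ≤ 0 ∧
        c * derivWithin g (Set.Ici 0) x - (lam + δ) * g x
          + lam * ∫ y in Set.Ioc 0 x, g (x - y) ∂μ
          + β * sSup {z : ℝ | ∃ f ≥ (0:ℝ), z = g (x + f) - g x - φ * f} ≤ 0) ∧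
      (1 - derivWithin g (Set.Ici 0) x = 0 ∨
        c * derivWithin g (Set.Ici 0) x - (lam + δ) * g x
          + lam * ∫ y in Set.Ioc 0 x, g (x - y) ∂μ
          + β * sSup {z : ℝ | ∃ f ≥ (0:ℝ), z = g (x + f) - g x - φ * f} = 0)) :
    (∀ x ≥ (0:ℝ), 1 ≤ derivWithin g (Set.Ici 0) x) ∧
    StrictMonoOn g (Set.Ici 0) ∧
    (∀ x ≥ (0:ℝ), c / (lam + δ) ≤ g x) ∧
    0 < c / (lam + δ) :=
  hjb_solution_monotone_and_bounded_below_general c lam δ β φ hc hlam hδ hβ μ g hg hHJB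
end

section
/- Assume (δ+λ)² ≥ c α λ and φ ≥ 1. Then the function g(x) = x + c/(λ+δ) solves the HJB equation; more precisely, for every x ≥ 0: 1 − g'(x) = 0, sup_{f ≥ 0} ( g(x+f) − g(x) − φ f ) = 0, and c g'(x) − (λ+δ) g(x) + λ ∫₀ˣ g(x−y) α e^{−α y} dy ≤ 0. -/
/-!
For `g x = x + k` with `k = c/(λ+δ)`, the dividend condition `g' = 1` and the vanishing of the
funding supremum (`φ ≥ 1`, attained at `f = 0`) are immediate. The claim integral has the closed
form `x + k - 1/α + (1/α - k) e^{-αx}`, and since `c = (λ+δ) k` the generator collapses to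
`λ (k - 1/α)(1 - e^{-αx}) - δ x`. If `k ≤ 1/α` this is `≤ 0` outright; otherwise
`1 - e^{-αx} ≤ αx` bounds it by `(λ(αk - 1) - δ) x`, and `λ(αk - 1) ≤ δ` is exactly
`cαλ ≤ (λ+δ)²`.
-/

open Real Set MeasureTheory

theorem sSup_funding_gain_eq_zero {g : ℝ → ℝ} {φ x : ℝ}
    (hg : ∀ f ≥ (0:ℝ), g (x + f) - g x - φ * f ≤ 0) :
    sSup {z : ℝ | ∃ f ≥ (0:ℝ), z = g (x + f) - g x - φ * f} = 0 := by
  refine IsGreatest.csSup_eq ⟨⟨0, le_rfl, by simp⟩, ?_⟩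
  rintro z ⟨f, hf, rfl⟩
  exact hg f hf

theorem integral_shifted_linear_mul_exp_density {α : ℝ} (hα : α ≠ 0) (k x : ℝ) :
    ∫ y in (0:ℝ)..x, ((x - y) + k) * (α * exp (-α * y))
      = x + k - 1 / α + (1 / α - k) * exp (-α * x) := by
  have hderiv : ∀ y ∈ uIcc (0:ℝ) x,
      HasDerivAt (fun y => (1 / α - x - k + y) * exp (-α * y))
        (((x - y) + k) * (α * exp (-α * y))) y := by
    intro y _
    have hexp : HasDerivAt (fun y => exp (-α * y)) (exp (-α * y) * -α) y := by
      simpa using ((hasDerivAt_id y).const_mul (-α)).exp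
    have hlin : HasDerivAt (fun y : ℝ => 1 / α - x - k + y) 1 y :=
      (hasDerivAt_id' y).const_add _
    have hprod : HasDerivAt (fun y => (1 / α - x - k + y) * exp (-α * y)) _ y := hlin.mul hexp
    convert hprod using 1
    field_simp
    ring
  have hint : IntervalIntegrable (fun y => ((x - y) + k) * (α * exp (-α * y))) volume 0 x :=
    (by fun_prop : Continuous _).intervalIntegrable _ _
  rw [intervalIntegral.integral_eq_sub_of_hasDerivAt hderiv hint]
  simp only [mul_zero, exp_zero, add_zero, mul_one]
  ring

theorem linear_generator_eq {c lam δ α : ℝ} (hα : α ≠ 0) (hs : lam + δ ≠ 0) (x : ℝ) :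
    c * 1 - (lam + δ) * (x + c / (lam + δ))
        + lam * ∫ y in (0:ℝ)..x, ((x - y) + c / (lam + δ)) * (α * exp (-α * y))
      = lam * (c / (lam + δ) - 1 / α) * (1 - exp (-α * x)) - δ * x := by
  rw [integral_shifted_linear_mul_exp_density hα]
  field_simp
  ring

theorem lam_mul_sub_le_of_sq_ge {c lam δ α : ℝ} (hs : 0 < lam + δ)
    (hpar : (δ + lam) ^ 2 ≥ c * α * lam) :
    lam * (α * (c / (lam + δ)) - 1) ≤ δ := by
  have : lam * (α * c) ≤ (lam + δ) * (lam + δ) := by nlinarith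
  have : lam * (α * (c / (lam + δ))) ≤ lam + δ := by
    rw [mul_div_assoc', mul_div_assoc', div_le_iff₀ hs]
    linarith
  linarith

theorem lam_mul_mul_one_sub_exp_neg_le {c lam δ α x : ℝ} (hlam : 0 ≤ lam) (hδ : 0 ≤ δ)
    (hα : 0 < α) (hx : 0 ≤ x) (hs : 0 < lam + δ) (hpar : (δ + lam) ^ 2 ≥ c * α * lam) :
    lam * (c / (lam + δ) - 1 / α) * (1 - exp (-α * x)) ≤ δ * x := by
  have hexp_le : 1 - exp (-α * x) ≤ α * x := by
    have := one_sub_le_exp_neg (α * x)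
    rw [neg_mul]
    linarith
  have hexp_nonneg : 0 ≤ 1 - exp (-α * x) := by
    simpa using exp_le_one_iff.mpr (by nlinarith : -α * x ≤ 0)
  rcases le_or_gt (c / (lam + δ)) (1 / α) with hk | hk
  · have : lam * (c / (lam + δ) - 1 / α) ≤ 0 :=
      mul_nonpos_of_nonneg_of_nonpos hlam (by linarith)
    nlinarith
  · calc lam * (c / (lam + δ) - 1 / α) * (1 - exp (-α * x))
        ≤ lam * (c / (lam + δ) - 1 / α) * (α * x) := by
          gcongr
      _ = lam * (α * (c / (lam + δ)) - 1) * x := by field_simp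
      _ ≤ δ * x := mul_le_mul_of_nonneg_right (lam_mul_sub_le_of_sq_ge hs hpar) hx

theorem linear_function_solves_hjb_general
    (c lam δ φ α : ℝ) (hlam : 0 < lam) (hδ : 0 < δ)
    (hφ : 1 ≤ φ) (hα : 0 < α)
    (hpar : (δ + lam) ^ 2 ≥ c * α * lam) :
    ∀ x ≥ (0:ℝ),
      1 - deriv (fun t => t + c / (lam + δ)) x = 0 ∧
      sSup {z : ℝ | ∃ f ≥ (0:ℝ),
        z = ((x + f) + c / (lam + δ)) - (x + c / (lam + δ)) - φ * f} = 0 ∧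
      c * deriv (fun t => t + c / (lam + δ)) x - (lam + δ) * (x + c / (lam + δ))
        + lam * ∫ y in (0:ℝ)..x, ((x - y) + c / (lam + δ)) * (α * Real.exp (-α * y)) ≤ 0 := by
  intro x hx
  have hs : 0 < lam + δ := by linarith
  have hderiv : deriv (fun t => t + c / (lam + δ)) x = 1 := by simp
  refine ⟨by rw [hderiv]; ring, ?_, ?_⟩
  · exact sSup_funding_gain_eq_zero (g := fun t => t + c / (lam + δ))
      fun f hf => by nlinarith
  · rw [hderiv, linear_generator_eq hα.ne' hs.ne']
    linarith [lam_mul_mul_one_sub_exp_neg_le hlam.le hδ.le hα hx hs hpar]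

/-- If `(δ+λ)² ≥ cαλ` and `φ ≥ 1`, the function `g(x) = x + c/(λ+δ)`
solves the HJB equation: at every `x ≥ 0`, `1 - g'(x) = 0`, the funding supremum is `0`,
and the integro-differential part is `≤ 0`. -/
theorem linear_function_solves_hjb
    (c lam δ β φ α : ℝ) (hc : 0 < c) (hlam : 0 < lam) (hδ : 0 < δ)
    (hβ : 0 < β) (hφ : 1 ≤ φ) (hα : 0 < α)
    (hpar : (δ + lam) ^ 2 ≥ c * α * lam) :
    ∀ x ≥ (0:ℝ),
      1 - deriv (fun t => t + c / (lam + δ)) x = 0 ∧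
      sSup {z : ℝ | ∃ f ≥ (0:ℝ),
        z = ((x + f) + c / (lam + δ)) - (x + c / (lam + δ)) - φ * f} = 0 ∧
      c * deriv (fun t => t + c / (lam + δ)) x - (lam + δ) * (x + c / (lam + δ))
        + lam * ∫ y in (0:ℝ)..x, ((x - y) + c / (lam + δ)) * (α * Real.exp (-α * y)) ≤ 0 :=
  linear_function_solves_hjb_general c lam δ φ α hlam hδ hφ hα hpar
end

section
/- Let S₁ < S₂ be the two real roots of c S² + (cα − δ − λ) S − δα = 0 and let h(x) := (S₁+α) e^{S₁ x} − (S₂+α) e^{S₂ x}. Then h satisfies the integro-differential equation c h'(x) − (δ+λ) h(x) + λ ∫₀ˣ h(x−y) α e^{−α y} dy = 0 for all x ≥ 0. -/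
open Real

/-!
Each root `S` of the characteristic quadratic gives a mode `(S + α) e^{S x}` whose residual in the
integro-differential equation is `-λ α e^{-α x}`, independently of `S`: the convolution with the
exponential density produces `α (e^{S x} - e^{-α x})`, and the quadratic kills the `e^{S x}` terms.
The difference of the two modes therefore has residual zero.
-/

theorem integral_mul_exp_convolution (S α x : ℝ) :
    ∫ y in (0:ℝ)..x, (S + α) * exp (S * (x - y)) * (α * exp (-α * y))
      = α * (exp (S * x) - exp (-α * x)) := by
  have hF : ∀ y, HasDerivAt (fun y => -α * (exp (S * (x - y)) * exp (-α * y)))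
      ((S + α) * exp (S * (x - y)) * (α * exp (-α * y))) y := by
    intro y
    have h₁ : HasDerivAt (fun y => exp (S * (x - y))) (exp (S * (x - y)) * -S) y := by
      simpa using (((hasDerivAt_id y).const_sub x).const_mul S).exp
    have h₂ : HasDerivAt (fun y => exp (-α * y)) (exp (-α * y) * -α) y := by
      simpa using ((hasDerivAt_id y).const_mul (-α)).exp
    exact ((h₁.fun_mul h₂).const_mul (-α)).congr_deriv (by ring)
  rw [intervalIntegral.integral_eq_sub_of_hasDerivAt (fun y _ => hF y)
    (Continuous.intervalIntegrable (by fun_prop) _ _)]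
  simp only [sub_self, mul_zero, exp_zero, sub_zero]
  ring

theorem residual_mul_exp_of_root {c lam δ α S : ℝ}
    (hroot : c * S ^ 2 + (c * α - δ - lam) * S - δ * α = 0) (x : ℝ) :
    c * ((S + α) * (exp (S * x) * S)) - (δ + lam) * ((S + α) * exp (S * x))
      + lam * ∫ y in (0:ℝ)..x, (S + α) * exp (S * (x - y)) * (α * exp (-α * y))
      = -(lam * α * exp (-α * x)) := by
  rw [integral_mul_exp_convolution]
  linear_combination exp (S * x) * hroot

theorem h_solves_integro_differential_equation_general
    (c lam δ α S₁ S₂ : ℝ)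
    (hroot1 : c * S₁ ^ 2 + (c * α - δ - lam) * S₁ - δ * α = 0)
    (hroot2 : c * S₂ ^ 2 + (c * α - δ - lam) * S₂ - δ * α = 0) :
    ∀ x ≥ (0:ℝ),
      c * deriv (fun t => (S₁ + α) * Real.exp (S₁ * t) - (S₂ + α) * Real.exp (S₂ * t)) x
        - (δ + lam) * ((S₁ + α) * Real.exp (S₁ * x) - (S₂ + α) * Real.exp (S₂ * x))
        + lam * ∫ y in (0:ℝ)..x,
            ((S₁ + α) * Real.exp (S₁ * (x - y)) - (S₂ + α) * Real.exp (S₂ * (x - y)))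
              * (α * Real.exp (-α * y)) = 0 := by
  intro x _
  have hmode : ∀ S, HasDerivAt (fun t => (S + α) * exp (S * t)) ((S + α) * (exp (S * x) * S)) x :=
    fun S => by simpa using (((hasDerivAt_id x).const_mul S).exp.const_mul (S + α))
  have hint : (∫ y in (0:ℝ)..x,
        ((S₁ + α) * exp (S₁ * (x - y)) - (S₂ + α) * exp (S₂ * (x - y))) * (α * exp (-α * y)))
      = (∫ y in (0:ℝ)..x, (S₁ + α) * exp (S₁ * (x - y)) * (α * exp (-α * y)))
        - ∫ y in (0:ℝ)..x, (S₂ + α) * exp (S₂ * (x - y)) * (α * exp (-α * y)) := by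
    simp only [sub_mul]
    exact intervalIntegral.integral_sub (Continuous.intervalIntegrable (by fun_prop) _ _)
      (Continuous.intervalIntegrable (by fun_prop) _ _)
  rw [((hmode S₁).fun_sub (hmode S₂)).deriv, hint]
  linear_combination residual_mul_exp_of_root hroot1 x - residual_mul_exp_of_root hroot2 x

/-- With `S₁ < S₂` the two real roots of `c S² + (cα − δ − λ) S − δα = 0`,
the function `h(x) = (S₁+α) e^{S₁ x} − (S₂+α) e^{S₂ x}` satisfies
`c h'(x) − (δ+λ) h(x) + λ ∫₀ˣ h(x−y) α e^{−α y} dy = 0` for all `x ≥ 0`. -/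
theorem h_solves_integro_differential_equation
    (c lam δ α S₁ S₂ : ℝ) (hc : 0 < c) (hlam : 0 < lam) (hδ : 0 < δ) (hα : 0 < α)
    (hS : S₁ < S₂)
    (hroot1 : c * S₁ ^ 2 + (c * α - δ - lam) * S₁ - δ * α = 0)
    (hroot2 : c * S₂ ^ 2 + (c * α - δ - lam) * S₂ - δ * α = 0)
    (hS1 : -α < S₁) (hS1' : S₁ < 0) (hS2 : 0 < S₂) :
    ∀ x ≥ (0:ℝ),
      c * deriv (fun t => (S₁ + α) * Real.exp (S₁ * t) - (S₂ + α) * Real.exp (S₂ * t)) x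
        - (δ + lam) * ((S₁ + α) * Real.exp (S₁ * x) - (S₂ + α) * Real.exp (S₂ * x))
        + lam * ∫ y in (0:ℝ)..x,
            ((S₁ + α) * Real.exp (S₁ * (x - y)) - (S₂ + α) * Real.exp (S₂ * (x - y)))
              * (α * Real.exp (-α * y)) = 0 :=
  h_solves_integro_differential_equation_general c lam δ α S₁ S₂ hroot1 hroot2
end

section
/- Let R₁ < R₂ be the two real roots of c R² + (cα − δ − λ − β) R − (δ+β)α = 0 and let k(x) := (R₁+α) e^{R₁ x} − (R₂+α) e^{R₂ x}. Then k satisfies the integro-differential equation c k'(x) − (δ+λ+β) k(x) + λ ∫₀ˣ k(x−y) α e^{−α y} dy = 0 for all x ≥ 0. -/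
open Real

/-! Convolving `y ↦ (R + α) e^{R y}` with the exponential density `α e^{-α y}` over `[0, x]` gives
`α (e^{R x} - e^{-α x})`. The `e^{-α x}` terms of the two summands of `k` therefore cancel, and what
is left of the equation is `e^{Rᵢ x}` times the characteristic quadratic at `Rᵢ`, which vanishes. -/

/-- The integrand is `exp (R * x - (R + a) * y)`, an exact derivative in `y`. -/
theorem mul_integral_exp_sub_mul_exp (R a x : ℝ) :
    (R + a) * ∫ y in (0:ℝ)..x, exp (R * (x - y)) * exp (-a * y) = exp (R * x) - exp (-a * x) := by
  have hderiv : ∀ y ∈ Set.uIcc (0:ℝ) x,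
      HasDerivAt (fun y => -(exp (R * (x - y)) * exp (-a * y)))
        ((R + a) * (exp (R * (x - y)) * exp (-a * y))) y := by
    intro y _
    have hR := (((hasDerivAt_id y).const_sub x).const_mul R).exp
    have ha := ((hasDerivAt_id y).const_mul (-a)).exp
    exact (hR.mul ha).neg.congr_deriv (by simp only [id]; ring)
  rw [← intervalIntegral.integral_const_mul,
    intervalIntegral.integral_eq_sub_of_hasDerivAt hderiv
      (Continuous.intervalIntegrable (by fun_prop) 0 x)]
  simp only [sub_self, mul_zero, exp_zero, one_mul, mul_one, sub_zero]
  ring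

theorem integral_exp_conv_exponentialDensity (R a x : ℝ) :
    ∫ y in (0:ℝ)..x, (R + a) * exp (R * (x - y)) * (a * exp (-a * y))
      = a * (exp (R * x) - exp (-a * x)) := by
  rw [← mul_integral_exp_sub_mul_exp, ← intervalIntegral.integral_const_mul,
    ← intervalIntegral.integral_const_mul]
  congr 1 with y
  ring

theorem k_solves_integro_differential_equation_general
    (c lam δ β α R₁ R₂ : ℝ)
    (hroot1 : c * R₁ ^ 2 + (c * α - δ - lam - β) * R₁ - (δ + β) * α = 0)
    (hroot2 : c * R₂ ^ 2 + (c * α - δ - lam - β) * R₂ - (δ + β) * α = 0) :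
    ∀ x ≥ (0:ℝ),
      c * deriv (fun t => (R₁ + α) * Real.exp (R₁ * t) - (R₂ + α) * Real.exp (R₂ * t)) x
        - (δ + lam + β) * ((R₁ + α) * Real.exp (R₁ * x) - (R₂ + α) * Real.exp (R₂ * x))
        + lam * ∫ y in (0:ℝ)..x,
            ((R₁ + α) * Real.exp (R₁ * (x - y)) - (R₂ + α) * Real.exp (R₂ * (x - y)))
              * (α * Real.exp (-α * y)) = 0 := by
  intro x _
  have hderiv : deriv (fun t => (R₁ + α) * exp (R₁ * t) - (R₂ + α) * exp (R₂ * t)) x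
      = (R₁ + α) * (R₁ * exp (R₁ * x)) - (R₂ + α) * (R₂ * exp (R₂ * x)) := by
    have h₁ := (((hasDerivAt_id x).const_mul R₁).exp).const_mul (R₁ + α)
    have h₂ := (((hasDerivAt_id x).const_mul R₂).exp).const_mul (R₂ + α)
    exact (h₁.sub h₂).deriv.trans (by simp only [id]; ring)
  have hconv : ∫ y in (0:ℝ)..x,
        ((R₁ + α) * exp (R₁ * (x - y)) - (R₂ + α) * exp (R₂ * (x - y))) * (α * exp (-α * y))
      = α * (exp (R₁ * x) - exp (-α * x)) - α * (exp (R₂ * x) - exp (-α * x)) := by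
    simp only [sub_mul]
    rw [intervalIntegral.integral_sub (Continuous.intervalIntegrable (by fun_prop) 0 x)
        (Continuous.intervalIntegrable (by fun_prop) 0 x),
      integral_exp_conv_exponentialDensity, integral_exp_conv_exponentialDensity]
  rw [hderiv, hconv]
  linear_combination exp (R₁ * x) * hroot1 - exp (R₂ * x) * hroot2

/-- With `R₁ < R₂` the two real roots of `c R² + (cα − δ − λ − β) R − (δ+β)α = 0`,
the function `k(x) = (R₁+α) e^{R₁ x} − (R₂+α) e^{R₂ x}` satisfies
`c k'(x) − (δ+λ+β) k(x) + λ ∫₀ˣ k(x−y) α e^{−α y} dy = 0` for all `x ≥ 0`. -/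
theorem k_solves_integro_differential_equation
    (c lam δ β α R₁ R₂ : ℝ) (hc : 0 < c) (hlam : 0 < lam) (hδ : 0 < δ) (hβ : 0 < β) (hα : 0 < α)
    (hR : R₁ < R₂)
    (hroot1 : c * R₁ ^ 2 + (c * α - δ - lam - β) * R₁ - (δ + β) * α = 0)
    (hroot2 : c * R₂ ^ 2 + (c * α - δ - lam - β) * R₂ - (δ + β) * α = 0)
    (hR1 : -α < R₁) (hR1' : R₁ < 0) (hR2 : 0 < R₂) :
    ∀ x ≥ (0:ℝ),
      c * deriv (fun t => (R₁ + α) * Real.exp (R₁ * t) - (R₂ + α) * Real.exp (R₂ * t)) x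
        - (δ + lam + β) * ((R₁ + α) * Real.exp (R₁ * x) - (R₂ + α) * Real.exp (R₂ * x))
        + lam * ∫ y in (0:ℝ)..x,
            ((R₁ + α) * Real.exp (R₁ * (x - y)) - (R₂ + α) * Real.exp (R₂ * (x - y)))
              * (α * Real.exp (-α * y)) = 0 :=
  k_solves_integro_differential_equation_general c lam δ β α R₁ R₂ hroot1 hroot2
end

section
/- Assume (δ+λ)² < c α λ. Then 0 < S₂²(S₂+α) < S₁²(S₁+α), so that the barrier level b̃ := ln( S₂²(S₂+α) / (S₁²(S₁+α)) ) / (S₁ − S₂) is strictly positive, and the second derivative of h vanishes there: h''(b̃) = 0. -/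
open Real

/-- `h(x) = (S₁+α) e^{S₁ x} − (S₂+α) e^{S₂ x}`. -/
noncomputable def hfun (α S₁ S₂ : ℝ) : ℝ → ℝ :=
  fun x => (S₁ + α) * Real.exp (S₁ * x) - (S₂ + α) * Real.exp (S₂ * x)

/-- `b̃ = ln( S₂²(S₂+α) / (S₁²(S₁+α)) ) / (S₁ − S₂)`. -/
noncomputable def btilde (α S₁ S₂ : ℝ) : ℝ :=
  Real.log (S₂ ^ 2 * (S₂ + α) / (S₁ ^ 2 * (S₁ + α))) / (S₁ - S₂)

/-!
With `g(S) = S²(S+α)` one has `g(S₁) − g(S₂) = (S₁ − S₂)(S₁² + S₁S₂ + S₂² + α(S₁ + S₂))`, and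
by Vieta's formulas `c²(S₁² + S₁S₂ + S₂² + α(S₁ + S₂)) = (δ+λ)² − cαλ`, which is negative by
assumption; hence `g(S₂) < g(S₁)` and `b̃ > 0`. Since `h''(x) = g(S₁) e^{S₁x} − g(S₂) e^{S₂x}`,
the point `b̃` is exactly where the two exponential terms balance.
-/

lemma vieta_sum_of_quadratic_roots {R : Type*} [CommRing R] [NoZeroDivisors R] {a b e x y : R}
    (hxy : x ≠ y) (hx : a * x ^ 2 + b * x + e = 0) (hy : a * y ^ 2 + b * y + e = 0) :
    a * (x + y) + b = 0 := by
  have h : (x - y) * (a * (x + y) + b) = 0 := by linear_combination hx - hy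
  exact (mul_eq_zero.mp h).resolve_left (sub_ne_zero_of_ne hxy)

lemma vieta_prod_of_quadratic_roots {R : Type*} [CommRing R] [NoZeroDivisors R] {a b e x y : R}
    (hxy : x ≠ y) (hx : a * x ^ 2 + b * x + e = 0) (hy : a * y ^ 2 + b * y + e = 0) :
    a * (x * y) = e := by
  linear_combination x * vieta_sum_of_quadratic_roots hxy hx hy - hx

lemma roots_sq_add_mul_add_sq_add_mul_neg {c lam δ α S₁ S₂ : ℝ} (hc : 0 < c) (hS : S₁ ≠ S₂)
    (hroot1 : c * S₁ ^ 2 + (c * α - δ - lam) * S₁ - δ * α = 0)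
    (hroot2 : c * S₂ ^ 2 + (c * α - δ - lam) * S₂ - δ * α = 0)
    (hpar : (δ + lam) ^ 2 < c * α * lam) :
    S₁ ^ 2 + S₁ * S₂ + S₂ ^ 2 + α * (S₁ + S₂) < 0 := by
  rw [sub_eq_add_neg] at hroot1 hroot2
  have hsum := vieta_sum_of_quadratic_roots hS hroot1 hroot2
  have hprod := vieta_prod_of_quadratic_roots hS hroot1 hroot2
  have hvieta : c ^ 2 * (S₁ ^ 2 + S₁ * S₂ + S₂ ^ 2 + α * (S₁ + S₂))
      = (δ + lam) ^ 2 - c * α * lam := by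
    linear_combination (c * (S₁ + S₂) + δ + lam) * hsum - c * hprod
  have hc2 : 0 < c ^ 2 := by positivity
  nlinarith

lemma sq_mul_add_lt_sq_mul_add {α S₁ S₂ : ℝ} (hS : S₁ < S₂)
    (hK : S₁ ^ 2 + S₁ * S₂ + S₂ ^ 2 + α * (S₁ + S₂) < 0) :
    S₂ ^ 2 * (S₂ + α) < S₁ ^ 2 * (S₁ + α) := by
  have hdiff : S₁ ^ 2 * (S₁ + α) - S₂ ^ 2 * (S₂ + α)
      = (S₁ - S₂) * (S₁ ^ 2 + S₁ * S₂ + S₂ ^ 2 + α * (S₁ + S₂)) := by ring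
  nlinarith [mul_pos_of_neg_of_neg (sub_neg.mpr hS) hK]

lemma btilde_pos {α S₁ S₂ : ℝ} (hS : S₁ < S₂) (hpos : 0 < S₂ ^ 2 * (S₂ + α))
    (hlt : S₂ ^ 2 * (S₂ + α) < S₁ ^ 2 * (S₁ + α)) : 0 < btilde α S₁ S₂ := by
  have hratio_pos := div_pos hpos (hpos.trans hlt)
  have hratio_lt_one := (div_lt_one (hpos.trans hlt)).mpr hlt
  exact div_pos_of_neg_of_neg (log_neg hratio_pos hratio_lt_one) (sub_neg.mpr hS)

lemma deriv_mul_exp_sub_mul_exp (a b s t : ℝ) :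
    deriv (fun x => a * exp (s * x) - b * exp (t * x))
      = fun x => a * s * exp (s * x) - b * t * exp (t * x) := by
  funext x
  have hs := ((hasDerivAt_id' x).const_mul s).exp.const_mul a
  have ht := ((hasDerivAt_id' x).const_mul t).exp.const_mul b
  exact ((hs.sub ht).congr_deriv (by ring)).deriv

lemma deriv_deriv_hfun (α S₁ S₂ : ℝ) :
    deriv (deriv (hfun α S₁ S₂))
      = fun x => S₁ ^ 2 * (S₁ + α) * exp (S₁ * x) - S₂ ^ 2 * (S₂ + α) * exp (S₂ * x) := by
  unfold hfun
  rw [deriv_mul_exp_sub_mul_exp, deriv_mul_exp_sub_mul_exp]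
  funext x
  ring

lemma mul_exp_eq_mul_exp_at_log_div {A B s t : ℝ} (hA : 0 < A) (hB : 0 < B) (hst : s ≠ t) :
    A * exp (s * (log (B / A) / (s - t))) = B * exp (t * (log (B / A) / (s - t))) := by
  set x := log (B / A) / (s - t)
  have hx : (s - t) * x = log (B / A) := mul_div_cancel₀ _ (sub_ne_zero_of_ne hst)
  calc A * exp (s * x) = A * (exp ((s - t) * x) * exp (t * x)) := by
        rw [← exp_add]; ring_nf
    _ = B * exp (t * x) := by
        rw [hx, exp_log (div_pos hB hA)]; field_simp

lemma deriv_deriv_hfun_btilde {α S₁ S₂ : ℝ} (hS : S₁ ≠ S₂)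
    (h₁ : 0 < S₁ ^ 2 * (S₁ + α)) (h₂ : 0 < S₂ ^ 2 * (S₂ + α)) :
    deriv (deriv (hfun α S₁ S₂)) (btilde α S₁ S₂) = 0 := by
  rw [deriv_deriv_hfun, btilde]
  dsimp only
  rw [mul_exp_eq_mul_exp_at_log_div h₁ h₂ hS, sub_self]

theorem btilde_pos_and_smooth_fit_general
    (c lam δ α S₁ S₂ : ℝ) (hc : 0 < c) (hα : 0 < α)
    (hS : S₁ < S₂)
    (hroot1 : c * S₁ ^ 2 + (c * α - δ - lam) * S₁ - δ * α = 0)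
    (hroot2 : c * S₂ ^ 2 + (c * α - δ - lam) * S₂ - δ * α = 0)
    (hS2 : 0 < S₂)
    (hpar : (δ + lam) ^ 2 < c * α * lam) :
    0 < S₂ ^ 2 * (S₂ + α) ∧
    S₂ ^ 2 * (S₂ + α) < S₁ ^ 2 * (S₁ + α) ∧
    0 < btilde α S₁ S₂ ∧
    deriv (deriv (hfun α S₁ S₂)) (btilde α S₁ S₂) = 0 := by
  have h₂ : 0 < S₂ ^ 2 * (S₂ + α) := by positivity
  have hlt : S₂ ^ 2 * (S₂ + α) < S₁ ^ 2 * (S₁ + α) :=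
    sq_mul_add_lt_sq_mul_add hS (roots_sq_add_mul_add_sq_add_mul_neg hc hS.ne hroot1 hroot2 hpar)
  exact ⟨h₂, hlt, btilde_pos hS h₂ hlt, deriv_deriv_hfun_btilde hS.ne (h₂.trans hlt) h₂⟩

/-- If `(δ+λ)² < cαλ` then `0 < S₂²(S₂+α) < S₁²(S₁+α)`, hence `b̃ > 0`,
and `h''(b̃) = 0`. -/
theorem btilde_pos_and_smooth_fit
    (c lam δ α S₁ S₂ : ℝ) (hc : 0 < c) (hlam : 0 < lam) (hδ : 0 < δ) (hα : 0 < α)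
    (hS : S₁ < S₂)
    (hroot1 : c * S₁ ^ 2 + (c * α - δ - lam) * S₁ - δ * α = 0)
    (hroot2 : c * S₂ ^ 2 + (c * α - δ - lam) * S₂ - δ * α = 0)
    (hS1 : -α < S₁) (hS1' : S₁ < 0) (hS2 : 0 < S₂)
    (hpar : (δ + lam) ^ 2 < c * α * lam) :
    0 < S₂ ^ 2 * (S₂ + α) ∧
    S₂ ^ 2 * (S₂ + α) < S₁ ^ 2 * (S₁ + α) ∧
    0 < btilde α S₁ S₂ ∧
    deriv (deriv (hfun α S₁ S₂)) (btilde α S₁ S₂) = 0 :=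
  btilde_pos_and_smooth_fit_general c lam δ α S₁ S₂ hc hα hS hroot1 hroot2 hS2 hpar
end

section
/- Assume (δ+λ)² < c α λ. Then h'(x) < 0 for all x ≥ 0 and h'''(x) < 0 for all x ≥ 0; consequently h''(x) > 0 for 0 ≤ x < b̃ and h''(x) < 0 for x > b̃. In particular the classical value function Ṽ(x) = h(x)/h'(b̃) is positive, strictly increasing, and strictly concave on [0, b̃). -/
open Real

lemma deriv_two_exp (a₁ a₂ s₁ s₂ : ℝ) :
    deriv (fun x => a₁ * Real.exp (s₁ * x) - a₂ * Real.exp (s₂ * x)) =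
    fun x => a₁ * s₁ * Real.exp (s₁ * x) - a₂ * s₂ * Real.exp (s₂ * x) := by
  funext x
  have h1 : HasDerivAt (fun x => a₁ * Real.exp (s₁ * x) - a₂ * Real.exp (s₂ * x))
      (a₁ * (Real.exp (s₁ * x) * (s₁ * 1)) - a₂ * (Real.exp (s₂ * x) * (s₂ * 1))) x :=
    ((((hasDerivAt_id x).const_mul s₁).exp).const_mul a₁).sub
      ((((hasDerivAt_id x).const_mul s₂).exp).const_mul a₂)
  rw [h1.deriv]; ring

lemma exp_compare (A B s₁ s₂ x : ℝ) (hA : 0 < A) (hB : 0 < B) (hs : s₁ < s₂) :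
    (x < Real.log (B / A) / (s₁ - s₂) → B * Real.exp (s₂ * x) < A * Real.exp (s₁ * x)) ∧
    (Real.log (B / A) / (s₁ - s₂) < x → A * Real.exp (s₁ * x) < B * Real.exp (s₂ * x)) := by
  have hd : s₁ - s₂ < 0 := by linarith
  have hd0 : s₁ - s₂ ≠ 0 := ne_of_lt hd
  have h4 : Real.exp ((s₁ - s₂) * x) * Real.exp (s₂ * x) = Real.exp (s₁ * x) := by
    rw [← Real.exp_add]; congr 1; ring
  constructor
  · intro hx
    have h1 : Real.log (B / A) < (s₁ - s₂) * x := by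
      have h := mul_lt_mul_of_neg_right hx hd
      rw [div_mul_cancel₀ _ hd0] at h
      nlinarith
    have h2 : B / A < Real.exp ((s₁ - s₂) * x) := by
      rw [← Real.exp_log (div_pos hB hA)]
      exact Real.exp_lt_exp.mpr h1
    have h3 : B < A * Real.exp ((s₁ - s₂) * x) := by
      rw [div_lt_iff₀ hA] at h2; linarith [h2, mul_comm (Real.exp ((s₁ - s₂) * x)) A]
    calc B * Real.exp (s₂ * x) < (A * Real.exp ((s₁ - s₂) * x)) * Real.exp (s₂ * x) :=
          mul_lt_mul_of_pos_right h3 (Real.exp_pos _)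
      _ = A * Real.exp (s₁ * x) := by rw [mul_assoc, h4]
  · intro hx
    have h1 : (s₁ - s₂) * x < Real.log (B / A) := by
      have h := mul_lt_mul_of_neg_right hx hd
      rw [div_mul_cancel₀ _ hd0] at h
      nlinarith
    have h2 : Real.exp ((s₁ - s₂) * x) < B / A := by
      rw [← Real.exp_log (div_pos hB hA)]
      exact Real.exp_lt_exp.mpr h1
    have h3 : A * Real.exp ((s₁ - s₂) * x) < B := by
      rw [lt_div_iff₀ hA] at h2; linarith [h2, mul_comm (Real.exp ((s₁ - s₂) * x)) A]
    calc A * Real.exp (s₁ * x) = (A * Real.exp ((s₁ - s₂) * x)) * Real.exp (s₂ * x) := by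
          rw [mul_assoc, h4]
      _ < B * Real.exp (s₂ * x) := mul_lt_mul_of_pos_right h3 (Real.exp_pos _)

/-- If `(δ+λ)² < cαλ` then `h' < 0` and `h''' < 0` on `[0,∞)`; consequently
`h'' > 0` on `[0, b̃)` and `h'' < 0` on `(b̃, ∞)`. In particular `Ṽ(x) = h(x)/h'(b̃)` is
positive, strictly increasing and strictly concave on `[0, b̃)`. -/
theorem classical_value_function_concave
    (c lam δ α S₁ S₂ : ℝ) (hc : 0 < c) (hlam : 0 < lam) (hδ : 0 < δ) (hα : 0 < α)
    (hS : S₁ < S₂)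
    (hroot1 : c * S₁ ^ 2 + (c * α - δ - lam) * S₁ - δ * α = 0)
    (hroot2 : c * S₂ ^ 2 + (c * α - δ - lam) * S₂ - δ * α = 0)
    (hS1 : -α < S₁) (hS1' : S₁ < 0) (hS2 : 0 < S₂)
    (hpar : (δ + lam) ^ 2 < c * α * lam) :
    (∀ x ≥ (0:ℝ), deriv (hfun α S₁ S₂) x < 0) ∧
    (∀ x ≥ (0:ℝ), deriv (deriv (deriv (hfun α S₁ S₂))) x < 0) ∧
    (∀ x : ℝ, 0 ≤ x → x < btilde α S₁ S₂ → 0 < deriv (deriv (hfun α S₁ S₂)) x) ∧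
    (∀ x : ℝ, btilde α S₁ S₂ < x → deriv (deriv (hfun α S₁ S₂)) x < 0) ∧
    (∀ x ∈ Set.Ico (0:ℝ) (btilde α S₁ S₂),
      0 < hfun α S₁ S₂ x / deriv (hfun α S₁ S₂) (btilde α S₁ S₂)) ∧
    StrictMonoOn (fun x => hfun α S₁ S₂ x / deriv (hfun α S₁ S₂) (btilde α S₁ S₂))
      (Set.Ico (0:ℝ) (btilde α S₁ S₂)) ∧
    StrictConcaveOn ℝ (Set.Ico (0:ℝ) (btilde α S₁ S₂))
      (fun x => hfun α S₁ S₂ x / deriv (hfun α S₁ S₂) (btilde α S₁ S₂)) := by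
  have hα1 : 0 < S₁ + α := by linarith
  have hα2 : 0 < S₂ + α := by linarith
  have d1 : deriv (hfun α S₁ S₂) =
      fun x => (S₁ + α) * S₁ * Real.exp (S₁ * x) - (S₂ + α) * S₂ * Real.exp (S₂ * x) := by
    unfold hfun; exact deriv_two_exp _ _ _ _
  have d2 : deriv (deriv (hfun α S₁ S₂)) =
      fun x => (S₁ + α) * S₁ * S₁ * Real.exp (S₁ * x)
        - (S₂ + α) * S₂ * S₂ * Real.exp (S₂ * x) := by
    rw [d1]; exact deriv_two_exp _ _ _ _
  have d3 : deriv (deriv (deriv (hfun α S₁ S₂))) =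
      fun x => (S₁ + α) * S₁ * S₁ * S₁ * Real.exp (S₁ * x)
        - (S₂ + α) * S₂ * S₂ * S₂ * Real.exp (S₂ * x) := by
    rw [d2]; exact deriv_two_exp _ _ _ _
  have s11 : 0 < S₁ * S₁ := mul_pos_of_neg_of_neg hS1' hS1'
  have hA : 0 < (S₁ + α) * S₁ * S₁ := by nlinarith
  have hB : 0 < (S₂ + α) * S₂ * S₂ := by positivity
  have h1neg : ∀ x : ℝ, deriv (hfun α S₁ S₂) x < 0 := by
    intro x
    simp only [d1]
    have t1 : (S₁ + α) * S₁ * Real.exp (S₁ * x) < 0 :=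
      mul_neg_of_neg_of_pos (mul_neg_of_pos_of_neg hα1 hS1') (Real.exp_pos _)
    have t2 : 0 < (S₂ + α) * S₂ * Real.exp (S₂ * x) :=
      mul_pos (mul_pos hα2 hS2) (Real.exp_pos _)
    linarith
  have h3neg : ∀ x : ℝ, deriv (deriv (deriv (hfun α S₁ S₂))) x < 0 := by
    intro x
    simp only [d3]
    have t1 : (S₁ + α) * S₁ * S₁ * S₁ * Real.exp (S₁ * x) < 0 :=
      mul_neg_of_neg_of_pos (mul_neg_of_pos_of_neg hA hS1') (Real.exp_pos _)
    have t2 : 0 < (S₂ + α) * S₂ * S₂ * S₂ * Real.exp (S₂ * x) :=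
      mul_pos (mul_pos hB hS2) (Real.exp_pos _)
    linarith
  have hbt : btilde α S₁ S₂ =
      Real.log ((S₂ + α) * S₂ * S₂ / ((S₁ + α) * S₁ * S₁)) / (S₁ - S₂) := by
    unfold btilde
    rw [show S₂ ^ 2 * (S₂ + α) = (S₂ + α) * S₂ * S₂ by ring,
      show S₁ ^ 2 * (S₁ + α) = (S₁ + α) * S₁ * S₁ by ring]
  have h2pos : ∀ x : ℝ, x < btilde α S₁ S₂ → 0 < deriv (deriv (hfun α S₁ S₂)) x := by
    intro x hx
    simp only [d2]
    have := (exp_compare ((S₁ + α) * S₁ * S₁) ((S₂ + α) * S₂ * S₂) S₁ S₂ x hA hB hS).1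
      (by rw [hbt] at hx; exact hx)
    linarith
  have h2neg : ∀ x : ℝ, btilde α S₁ S₂ < x → deriv (deriv (hfun α S₁ S₂)) x < 0 := by
    intro x hx
    simp only [d2]
    have := (exp_compare ((S₁ + α) * S₁ * S₁) ((S₂ + α) * S₂ * S₂) S₁ S₂ x hA hB hS).2
      (by rw [hbt] at hx; exact hx)
    linarith
  have hK : deriv (hfun α S₁ S₂) (btilde α S₁ S₂) < 0 := h1neg _
  have hneg : ∀ x : ℝ, 0 ≤ x → hfun α S₁ S₂ x < 0 := by
    intro x hx
    unfold hfun
    have e1 : Real.exp (S₁ * x) ≤ 1 := by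
      rw [← Real.exp_zero]
      exact Real.exp_le_exp.mpr (mul_nonpos_of_nonpos_of_nonneg hS1'.le hx)
    have e2 : 1 ≤ Real.exp (S₂ * x) := by
      rw [← Real.exp_zero]
      exact Real.exp_le_exp.mpr (mul_nonneg hS2.le hx)
    nlinarith [mul_le_of_le_one_right hα1.le e1, le_mul_of_one_le_right hα2.le e2]
  have hcontV : ContinuousOn
      (fun x => hfun α S₁ S₂ x / deriv (hfun α S₁ S₂) (btilde α S₁ S₂))
      (Set.Ico (0:ℝ) (btilde α S₁ S₂)) := by
    apply Continuous.continuousOn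
    apply Continuous.div_const
    unfold hfun; fun_prop
  have dV : deriv (fun x => hfun α S₁ S₂ x / deriv (hfun α S₁ S₂) (btilde α S₁ S₂)) =
      fun x => deriv (hfun α S₁ S₂) x / deriv (hfun α S₁ S₂) (btilde α S₁ S₂) := by
    funext x; exact deriv_div_const _
  have dV2 : deriv (deriv (fun x => hfun α S₁ S₂ x /
        deriv (hfun α S₁ S₂) (btilde α S₁ S₂))) =
      fun x => deriv (deriv (hfun α S₁ S₂)) x / deriv (hfun α S₁ S₂) (btilde α S₁ S₂) := by
    rw [dV]; funext x; exact deriv_div_const _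
  refine ⟨fun x _ => h1neg x, fun x _ => h3neg x, fun x _ hx => h2pos x hx, h2neg,
    fun x hx => div_pos_of_neg_of_neg (hneg x hx.1) hK, ?_, ?_⟩
  · apply strictMonoOn_of_deriv_pos (convex_Ico _ _) hcontV
    intro x hx
    rw [dV]
    exact div_pos_of_neg_of_neg (h1neg x) hK
  · apply strictConcaveOn_of_deriv2_neg (convex_Ico _ _) hcontV
    intro x hx
    rw [interior_Ico] at hx
    show deriv^[2] _ x < 0
    rw [show (deriv^[2] (fun x => hfun α S₁ S₂ x / deriv (hfun α S₁ S₂) (btilde α S₁ S₂))) =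
      deriv (deriv (fun x => hfun α S₁ S₂ x / deriv (hfun α S₁ S₂) (btilde α S₁ S₂))) from rfl]
    rw [dV2]
    exact div_neg_of_pos_of_neg (h2pos x hx.2) hK
end

section
/- Assume (δ+λ)² < c α λ. Then h'(0) = (S₁ − S₂)(α + S₁ + S₂), and the marginal value at zero of the classical dividend value function satisfies the closed-form identity h'(0)/h'(b̃) = ( S₂ e^{−S₁ b̃} − S₁ e^{−S₂ b̃} ) / (S₂ − S₁), and this quantity is strictly greater than 1. -/
open Real

lemma hfun_deriv (α S₁ S₂ x : ℝ) :
    deriv (hfun α S₁ S₂) x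
      = S₁ * (S₁ + α) * Real.exp (S₁ * x) - S₂ * (S₂ + α) * Real.exp (S₂ * x) := by
  have h1 : HasDerivAt (fun y : ℝ => S₁ * y) S₁ x := by
    simpa using (hasDerivAt_id x).const_mul S₁
  have h2 : HasDerivAt (fun y : ℝ => S₂ * y) S₂ x := by
    simpa using (hasDerivAt_id x).const_mul S₂
  have h : HasDerivAt (hfun α S₁ S₂)
      ((S₁ + α) * (Real.exp (S₁ * x) * S₁) - (S₂ + α) * (Real.exp (S₂ * x) * S₂)) x :=
    ((h1.exp.const_mul (S₁ + α)).sub (h2.exp.const_mul (S₂ + α)))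
  rw [h.deriv]; ring

/-- If `(δ+λ)² < cαλ` then `h'(0) = (S₁−S₂)(α+S₁+S₂)`,
`h'(0)/h'(b̃) = (S₂ e^{−S₁ b̃} − S₁ e^{−S₂ b̃})/(S₂−S₁)`, and this quantity is `> 1`. -/
theorem marginal_value_at_zero
    (c lam δ α S₁ S₂ : ℝ) (hc : 0 < c) (hlam : 0 < lam) (hδ : 0 < δ) (hα : 0 < α)
    (hS : S₁ < S₂)
    (hroot1 : c * S₁ ^ 2 + (c * α - δ - lam) * S₁ - δ * α = 0)
    (hroot2 : c * S₂ ^ 2 + (c * α - δ - lam) * S₂ - δ * α = 0)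
    (hS1 : -α < S₁) (hS1' : S₁ < 0) (hS2 : 0 < S₂)
    (hpar : (δ + lam) ^ 2 < c * α * lam) :
    deriv (hfun α S₁ S₂) 0 = (S₁ - S₂) * (α + S₁ + S₂) ∧
    deriv (hfun α S₁ S₂) 0 / deriv (hfun α S₁ S₂) (btilde α S₁ S₂)
      = (S₂ * Real.exp (-S₁ * btilde α S₁ S₂) - S₁ * Real.exp (-S₂ * btilde α S₁ S₂))
          / (S₂ - S₁) ∧
    1 < deriv (hfun α S₁ S₂) 0 / deriv (hfun α S₁ S₂) (btilde α S₁ S₂) := by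
  set t := btilde α S₁ S₂ with ht
  have hS1α : 0 < S₁ + α := by linarith
  have hS2α : 0 < S₂ + α := by linarith
  have hne : S₁ - S₂ ≠ 0 := sub_ne_zero.mpr hS.ne
  have hS1ne : S₁ ≠ 0 := ne_of_lt hS1'
  have hS2ne : S₂ ≠ 0 := ne_of_gt hS2
  -- Vieta
  have hsum : c * (S₁ + S₂) = δ + lam - c * α := by
    have h : (S₁ - S₂) * (c * (S₁ + S₂) - (δ + lam - c * α)) = 0 := by
      linear_combination hroot1 - hroot2
    have := (mul_eq_zero.mp h).resolve_left hne
    linarith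
  have hprod : c * (S₁ * S₂) = -(δ * α) := by
    have h : (S₁ - S₂) * (c * (S₁ * S₂) + δ * α) = 0 := by
      linear_combination S₂ * hroot1 - S₁ * hroot2
    have := (mul_eq_zero.mp h).resolve_left hne
    linarith
  -- key algebraic inequality: S₂²(S₂+α) < S₁²(S₁+α)
  have hid : c ^ 2 * (S₁ ^ 2 * (S₁ + α) - S₂ ^ 2 * (S₂ + α))
      = (S₁ - S₂) * ((δ + lam) ^ 2 - c * α * lam) := by
    linear_combination ((S₁ - S₂) * (c * (S₁ + S₂) + (δ + lam - c * α) + α * c)) * hsum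
      - (c * (S₁ - S₂)) * hprod
  have hlt : S₂ ^ 2 * (S₂ + α) < S₁ ^ 2 * (S₁ + α) := by
    nlinarith [mul_pos hc hc]
  -- R and t > 0
  have hnum : 0 < S₂ ^ 2 * (S₂ + α) := by positivity
  have hden : 0 < S₁ ^ 2 * (S₁ + α) := by
    have : 0 < S₁ ^ 2 := by positivity
    positivity
  have hRpos : 0 < S₂ ^ 2 * (S₂ + α) / (S₁ ^ 2 * (S₁ + α)) := div_pos hnum hden
  have hRlt1 : S₂ ^ 2 * (S₂ + α) / (S₁ ^ 2 * (S₁ + α)) < 1 :=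
    (div_lt_one hden).mpr hlt
  have htpos : 0 < t := by
    rw [ht, btilde]
    apply div_pos_of_neg_of_neg
    · exact Real.log_neg hRpos hRlt1
    · linarith
  -- key exponential identity at t
  have hkey : S₁ ^ 2 * (S₁ + α) * Real.exp (S₁ * t) = S₂ ^ 2 * (S₂ + α) * Real.exp (S₂ * t) := by
    have h1 : (S₁ - S₂) * t = Real.log (S₂ ^ 2 * (S₂ + α) / (S₁ ^ 2 * (S₁ + α))) := by
      rw [ht, btilde]; field_simp
    have h2 : Real.exp ((S₁ - S₂) * t) = S₂ ^ 2 * (S₂ + α) / (S₁ ^ 2 * (S₁ + α)) := by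
      rw [h1, Real.exp_log hRpos]
    have h3 : S₁ * t = (S₁ - S₂) * t + S₂ * t := by ring
    rw [h3, Real.exp_add, h2]
    field_simp
  have E1pos := Real.exp_pos (S₁ * t)
  have E2pos := Real.exp_pos (S₂ * t)
  -- derivative values
  have d0 : deriv (hfun α S₁ S₂) 0 = S₁ * (S₁ + α) - S₂ * (S₂ + α) := by
    rw [hfun_deriv]; simp
  have dt : deriv (hfun α S₁ S₂) t
      = S₁ * (S₁ + α) * Real.exp (S₁ * t) - S₂ * (S₂ + α) * Real.exp (S₂ * t) :=
    hfun_deriv α S₁ S₂ t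
  have hdtneg : deriv (hfun α S₁ S₂) t < 0 := by
    rw [dt]
    have h1 : S₁ * (S₁ + α) * Real.exp (S₁ * t) < 0 := by
      apply mul_neg_of_neg_of_pos _ E1pos
      exact mul_neg_of_neg_of_pos hS1' hS1α
    have h2 : 0 < S₂ * (S₂ + α) * Real.exp (S₂ * t) := by positivity
    linarith
  have hdtne' : deriv (hfun α S₁ S₂) t ≠ 0 := ne_of_lt hdtneg
  -- part 2
  have hne' : S₂ - S₁ ≠ 0 := sub_ne_zero.mpr hS.ne'
  have hdenne : S₁ * (S₁ + α) * Real.exp (S₁ * t) - S₂ * (S₂ + α) * Real.exp (S₂ * t) ≠ 0 := by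
    rw [← dt]; exact hdtne'
  have part2 : deriv (hfun α S₁ S₂) 0 / deriv (hfun α S₁ S₂) t
      = (S₂ * Real.exp (-S₁ * t) - S₁ * Real.exp (-S₂ * t)) / (S₂ - S₁) := by
    rw [d0, dt, neg_mul, neg_mul, Real.exp_neg, Real.exp_neg,
      div_eq_div_iff hdenne hne']
    field_simp
    linear_combination (Real.exp (S₁ * t) - Real.exp (S₂ * t)) * hkey
  -- part 3: strict inequality via e^x > 1 + x
  have hx1 : (0:ℝ) < -(S₁ * t) := by
    have := mul_pos (neg_pos.mpr hS1') htpos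
    linarith [this]
  have hx2 : -(S₂ * t) < 0 := by
    have := mul_pos hS2 htpos
    linarith [this]
  have e1 : -(S₁ * t) + 1 < Real.exp (-(S₁ * t)) := Real.add_one_lt_exp (ne_of_gt hx1)
  have e2 : -(S₂ * t) + 1 < Real.exp (-(S₂ * t)) := Real.add_one_lt_exp (ne_of_lt hx2)
  have hE1 : Real.exp (S₁ * t) * Real.exp (-(S₁ * t)) = 1 := by
    rw [← Real.exp_add, add_neg_cancel, Real.exp_zero]
  have hE2 : Real.exp (S₂ * t) * Real.exp (-(S₂ * t)) = 1 := by
    rw [← Real.exp_add, add_neg_cancel, Real.exp_zero]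
  have c1 : 0 < -(S₁ * (S₁ + α)) * Real.exp (S₁ * t) := by
    have : 0 < -(S₁ * (S₁ + α)) := by
      have := mul_pos (neg_pos.mpr hS1') hS1α
      linarith [this]
    positivity
  have c2 : 0 < S₂ * (S₂ + α) * Real.exp (S₂ * t) := by positivity
  have i1 : -(S₁ * (S₁ + α)) * Real.exp (S₁ * t) * (-(S₁ * t) + 1)
      < -(S₁ * (S₁ + α)) := by
    have h := mul_lt_mul_of_pos_left e1 c1
    calc -(S₁ * (S₁ + α)) * Real.exp (S₁ * t) * (-(S₁ * t) + 1)
        < -(S₁ * (S₁ + α)) * Real.exp (S₁ * t) * Real.exp (-(S₁ * t)) := h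
      _ = -(S₁ * (S₁ + α)) * (Real.exp (S₁ * t) * Real.exp (-(S₁ * t))) := by ring
      _ = -(S₁ * (S₁ + α)) := by rw [hE1, mul_one]
  have i2 : S₂ * (S₂ + α) * Real.exp (S₂ * t) * (-(S₂ * t) + 1)
      < S₂ * (S₂ + α) := by
    have h := mul_lt_mul_of_pos_left e2 c2
    calc S₂ * (S₂ + α) * Real.exp (S₂ * t) * (-(S₂ * t) + 1)
        < S₂ * (S₂ + α) * Real.exp (S₂ * t) * Real.exp (-(S₂ * t)) := h
      _ = S₂ * (S₂ + α) * (Real.exp (S₂ * t) * Real.exp (-(S₂ * t))) := by ring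
      _ = S₂ * (S₂ + α) := by rw [hE2, mul_one]
  have hkeyt : t * (S₁ ^ 2 * (S₁ + α) * Real.exp (S₁ * t))
      = t * (S₂ ^ 2 * (S₂ + α) * Real.exp (S₂ * t)) := by rw [hkey]
  have h40 : deriv (hfun α S₁ S₂) 0 < deriv (hfun α S₁ S₂) t := by
    rw [d0, dt]; linarith only [i1, i2, hkeyt]
  have part3 : 1 < deriv (hfun α S₁ S₂) 0 / deriv (hfun α S₁ S₂) t := by
    rw [lt_div_iff_of_neg hdtneg]
    linarith
  exact ⟨by rw [d0]; ring, part2, part3⟩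
end

section
/- Let S₁ < 0 < S₂ be real numbers and φ > 1. Define H(h) := φ (S₂ − S₁) + S₁ e^{−S₂ h} − S₂ e^{−S₁ h}. Then H(0) = (φ − 1)(S₂ − S₁) > 0, H'(h) < 0 for all h > 0, and H(h) → −∞ as h → ∞; hence there exists a unique h̄ > 0 with H(h̄) = 0. Moreover, if in addition φ < ( S₂ e^{−S₁ b} − S₁ e^{−S₂ b} ) / (S₂ − S₁) for some b > 0, then h̄ < b. -/
/-!
`H'(h) = S₁ S₂ (e^{-S₁ h} - e^{-S₂ h})` is negative for `h > 0`, because `S₁ S₂ < 0` and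
`-S₁ h > -S₂ h`; so `H` is strictly decreasing on `[0, ∞)`. It starts at
`(φ - 1)(S₂ - S₁) > 0` and tends to `-∞`, since `S₁ e^{-S₂ h} → 0` while `S₂ e^{-S₁ h} → ∞`.
The intermediate value theorem gives a zero `h̄`, strict monotonicity makes it unique, and the
condition on `b` says precisely that `H(b) < 0 = H(h̄)`, i.e. `h̄ < b`.
-/

open Real Filter Set

theorem exists_unique_pos_zero_of_strictAntiOn {f : ℝ → ℝ} (hf : ContinuousOn f (Ici 0))
    (hanti : StrictAntiOn f (Ici 0)) (h0 : 0 < f 0) (hbot : Tendsto f atTop atBot) :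
    ∃ x, (0 < x ∧ f x = 0) ∧ ∀ y, 0 < y → f y = 0 → y = x := by
  obtain ⟨N, hN, hN0⟩ :=
    ((hbot.eventually (eventually_lt_atBot 0)).and (eventually_ge_atTop 0)).exists
  obtain ⟨x, hx, hfx⟩ :=
    intermediate_value_Icc' hN0 (hf.mono Icc_subset_Ici_self) ⟨hN.le, h0.le⟩
  have hx0 : 0 < x := hx.1.lt_of_ne (by rintro rfl; linarith)
  exact ⟨x, ⟨hx0, hfx⟩, fun y hy hfy ↦
    hanti.injOn (mem_Ici.2 hy.le) (mem_Ici.2 hx0.le) (hfy.trans hfx.symm)⟩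

namespace HbarEquation

variable (S₁ S₂ φ : ℝ)

noncomputable def H (t : ℝ) : ℝ :=
  φ * (S₂ - S₁) + S₁ * exp (-S₂ * t) - S₂ * exp (-S₁ * t)

theorem H_zero : H S₁ S₂ φ 0 = (φ - 1) * (S₂ - S₁) := by
  simp only [H, mul_zero, exp_zero]
  ring

theorem hasDerivAt_H (t : ℝ) :
    HasDerivAt (H S₁ S₂ φ) (S₁ * S₂ * (exp (-S₁ * t) - exp (-S₂ * t))) t := by
  have hexp (c : ℝ) : HasDerivAt (fun t ↦ exp (c * t)) (exp (c * t) * c) t := by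
    simpa using ((hasDerivAt_id t).const_mul c).exp
  exact (((hasDerivAt_const t (φ * (S₂ - S₁))).add ((hexp (-S₂)).const_mul S₁)).sub
    ((hexp (-S₁)).const_mul S₂)).congr_deriv (by ring)

theorem continuous_H : Continuous (H S₁ S₂ φ) := by
  unfold H
  fun_prop

variable {S₁ S₂}

theorem deriv_H_neg (hS₁ : S₁ < 0) (hS₂ : 0 < S₂) {t : ℝ} (ht : 0 < t) :
    deriv (H S₁ S₂ φ) t < 0 := by
  rw [(hasDerivAt_H S₁ S₂ φ t).deriv]
  have hexp : exp (-S₂ * t) < exp (-S₁ * t) := exp_lt_exp.2 (by nlinarith)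
  exact mul_neg_of_neg_of_pos (mul_neg_of_neg_of_pos hS₁ hS₂) (sub_pos.2 hexp)

theorem strictAntiOn_H (hS₁ : S₁ < 0) (hS₂ : 0 < S₂) : StrictAntiOn (H S₁ S₂ φ) (Ici 0) :=
  strictAntiOn_of_deriv_neg (convex_Ici 0) (continuous_H S₁ S₂ φ).continuousOn
    fun _ ht ↦ deriv_H_neg φ hS₁ hS₂ (by rwa [interior_Ici] at ht)

theorem tendsto_H_atBot (hS₁ : S₁ < 0) (hS₂ : 0 < S₂) : Tendsto (H S₁ S₂ φ) atTop atBot := by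
  have hdecay : Tendsto (fun t ↦ exp (-S₂ * t)) atTop (nhds 0) :=
    tendsto_exp_atBot.comp (tendsto_id.const_mul_atTop_of_neg (neg_lt_zero.2 hS₂))
  have hgrowth : Tendsto (fun t ↦ -S₂ * exp (-S₁ * t)) atTop atBot :=
    (tendsto_exp_atTop.comp (tendsto_id.const_mul_atTop (neg_pos.2 hS₁))).const_mul_atTop_of_neg
      (neg_lt_zero.2 hS₂)
  have hsum := (tendsto_const_nhds (x := φ * (S₂ - S₁))).add (hdecay.const_mul S₁)
  convert hsum.add_atBot hgrowth using 1
  ext t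
  simp only [H]
  ring

theorem H_neg_iff_lt_div (hS : S₁ < S₂) (b : ℝ) :
    H S₁ S₂ φ b < 0 ↔ φ < (S₂ * exp (-S₁ * b) - S₁ * exp (-S₂ * b)) / (S₂ - S₁) := by
  rw [lt_div_iff₀ (sub_pos.2 hS), H]
  constructor <;> intro h <;> linarith

end HbarEquation

open HbarEquation in
/-- For `S₁ < 0 < S₂` and `φ > 1`, the function
`H(h) = φ(S₂−S₁) + S₁ e^{−S₂ h} − S₂ e^{−S₁ h}` satisfies
`H(0) = (φ−1)(S₂−S₁) > 0`, `H' < 0` on `(0,∞)`, `H → −∞` at `∞`; hence there is a unique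
`h̄ > 0` with `H(h̄) = 0`, and if `φ < (S₂ e^{−S₁ b} − S₁ e^{−S₂ b})/(S₂−S₁)` for some
`b > 0` then `h̄ < b`. -/
theorem existence_unique_hbar
    (S₁ S₂ φ : ℝ) (hS1 : S₁ < 0) (hS2 : 0 < S₂) (hφ : 1 < φ) :
    (φ * (S₂ - S₁) + S₁ * Real.exp (-S₂ * 0) - S₂ * Real.exp (-S₁ * 0)
      = (φ - 1) * (S₂ - S₁)) ∧
    (0 < (φ - 1) * (S₂ - S₁)) ∧
    (∀ h : ℝ, 0 < h →
      deriv (fun t => φ * (S₂ - S₁) + S₁ * Real.exp (-S₂ * t) - S₂ * Real.exp (-S₁ * t)) h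
        < 0) ∧
    Tendsto (fun t => φ * (S₂ - S₁) + S₁ * Real.exp (-S₂ * t) - S₂ * Real.exp (-S₁ * t))
      atTop atBot ∧
    ∃ hbar : ℝ, (0 < hbar ∧
        φ * (S₂ - S₁) + S₁ * Real.exp (-S₂ * hbar) - S₂ * Real.exp (-S₁ * hbar) = 0) ∧
      (∀ h' : ℝ, 0 < h' →
        φ * (S₂ - S₁) + S₁ * Real.exp (-S₂ * h') - S₂ * Real.exp (-S₁ * h') = 0 →
        h' = hbar) ∧
      (∀ b : ℝ, 0 < b →
        φ < (S₂ * Real.exp (-S₁ * b) - S₁ * Real.exp (-S₂ * b)) / (S₂ - S₁) →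
        hbar < b) := by
  have hS : S₁ < S₂ := hS1.trans hS2
  have hH0 : 0 < (φ - 1) * (S₂ - S₁) := mul_pos (sub_pos.2 hφ) (sub_pos.2 hS)
  have hanti := strictAntiOn_H φ hS1 hS2
  obtain ⟨hbar, ⟨hpos, hzero⟩, huniq⟩ :=
    exists_unique_pos_zero_of_strictAntiOn (continuous_H S₁ S₂ φ).continuousOn hanti
      (by rwa [H_zero]) (tendsto_H_atBot φ hS1 hS2)
  refine ⟨H_zero S₁ S₂ φ, hH0, fun _ ↦ deriv_H_neg φ hS1 hS2, tendsto_H_atBot φ hS1 hS2,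
    hbar, ⟨hpos, hzero⟩, huniq, fun b hb hφb ↦ ?_⟩
  rw [← hanti.lt_iff_gt hb.le hpos.le, hzero]
  exact (H_neg_iff_lt_div φ hS b).2 hφb
end

section
/- The map h ↦ ( S₂ e^{−S₁ h} − S₁ e^{−S₂ h} ) / (S₂ − S₁) is strictly increasing on [0,∞), takes the value 1 at h = 0, and tends to +∞ as h → ∞, whenever S₁ < 0 < S₂. -/
open Real Filter

/-- For `S₁ < 0 < S₂`, the map
`h ↦ (S₂ e^{−S₁ h} − S₁ e^{−S₂ h})/(S₂ − S₁)` is strictly increasing on `[0,∞)`,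
equals `1` at `h = 0`, and tends to `+∞` as `h → ∞`. -/
theorem marginal_value_map_strict_mono
    (S₁ S₂ : ℝ) (hS1 : S₁ < 0) (hS2 : 0 < S₂) :
    StrictMonoOn
      (fun h => (S₂ * Real.exp (-S₁ * h) - S₁ * Real.exp (-S₂ * h)) / (S₂ - S₁))
      (Set.Ici (0:ℝ)) ∧
    (S₂ * Real.exp (-S₁ * 0) - S₁ * Real.exp (-S₂ * 0)) / (S₂ - S₁) = 1 ∧
    Tendsto (fun h => (S₂ * Real.exp (-S₁ * h) - S₁ * Real.exp (-S₂ * h)) / (S₂ - S₁))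
      atTop atTop := by
  have hd : (0:ℝ) < S₂ - S₁ := by linarith
  set g : ℝ → ℝ := fun h => S₂ * Real.exp (-S₁ * h) - S₁ * Real.exp (-S₂ * h) with hg
  have hderiv : ∀ h : ℝ, HasDerivAt g
      (S₂ * (Real.exp (-S₁ * h) * -S₁) - S₁ * (Real.exp (-S₂ * h) * -S₂)) h := by
    intro h
    have h1 : HasDerivAt (fun x : ℝ => -S₁ * x) (-S₁) h := by
      simpa using (hasDerivAt_id h).const_mul (-S₁)
    have h2 : HasDerivAt (fun x : ℝ => -S₂ * x) (-S₂) h := by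
      simpa using (hasDerivAt_id h).const_mul (-S₂)
    exact ((h1.exp.const_mul S₂).sub (h2.exp.const_mul S₁))
  have hgmono : StrictMonoOn g (Set.Ici (0:ℝ)) := by
    apply strictMonoOn_of_deriv_pos (convex_Ici 0)
    · exact (Continuous.sub (continuous_const.mul (Real.continuous_exp.comp
        (continuous_const.mul continuous_id)))
        (continuous_const.mul (Real.continuous_exp.comp
        (continuous_const.mul continuous_id)))).continuousOn
    · intro x hx
      rw [interior_Ici] at hx
      rw [(hderiv x).deriv]
      have hxe : Real.exp (-S₂ * x) < Real.exp (-S₁ * x) := by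
        apply Real.exp_lt_exp.mpr
        nlinarith [Set.mem_Ioi.mp hx]
      nlinarith [mul_pos (mul_pos (neg_pos.mpr hS1) hS2) (sub_pos.mpr hxe)]
  refine ⟨?_, ?_, ?_⟩
  · intro x hx y hy hxy
    have := hgmono hx hy hxy
    exact div_lt_div_of_pos_right this hd
  · rw [mul_zero, mul_zero, Real.exp_zero]
    field_simp
  · apply Tendsto.atTop_div_const hd
    have h1 : Tendsto (fun h : ℝ => S₂ * Real.exp (-S₁ * h)) atTop atTop := by
      apply Tendsto.const_mul_atTop hS2
      exact Real.tendsto_exp_atTop.comp (tendsto_id.const_mul_atTop (by linarith : (0:ℝ) < -S₁))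
    have h2 : Tendsto (fun h : ℝ => -(S₁ * Real.exp (-S₂ * h))) atTop (nhds (-(S₁ * 0))) := by
      apply Tendsto.neg
      apply Tendsto.const_mul
      have := Real.tendsto_exp_neg_atTop_nhds_zero.comp
        (tendsto_id.const_mul_atTop hS2)
      exact this.congr (by intro x; simp [neg_mul])
    simpa [sub_eq_add_neg] using h1.atTop_add h2
end

section
/- Let S₁ ≠ S₂ be real numbers, a ≠ b real numbers, and B₁, B₂, φ real numbers satisfying the three conditions B₁ S₁ e^{S₁ b} + B₂ S₂ e^{S₂ b} = 1, B₁ S₁ e^{S₁ a} + B₂ S₂ e^{S₂ a} = φ, and B₁ S₁² e^{S₁ b} + B₂ S₂² e^{S₂ b} = 0. Then φ (S₂ − S₁) + S₁ e^{S₂ (a−b)} − S₂ e^{S₁ (a−b)} = 0. -/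
open Real

/-- If `B₁ S₁ e^{S₁ b} + B₂ S₂ e^{S₂ b} = 1`,
`B₁ S₁ e^{S₁ a} + B₂ S₂ e^{S₂ a} = φ` and `B₁ S₁² e^{S₁ b} + B₂ S₂² e^{S₂ b} = 0`, then
`φ (S₂ − S₁) + S₁ e^{S₂ (a−b)} − S₂ e^{S₁ (a−b)} = 0`. -/
theorem smooth_fit_implies_H_eq_zero
    (S₁ S₂ a b B₁ B₂ φ : ℝ) (hS : S₁ ≠ S₂) (hab : a ≠ b)
    (h1 : B₁ * S₁ * Real.exp (S₁ * b) + B₂ * S₂ * Real.exp (S₂ * b) = 1)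
    (h2 : B₁ * S₁ * Real.exp (S₁ * a) + B₂ * S₂ * Real.exp (S₂ * a) = φ)
    (h3 : B₁ * S₁ ^ 2 * Real.exp (S₁ * b) + B₂ * S₂ ^ 2 * Real.exp (S₂ * b) = 0) :
    φ * (S₂ - S₁) + S₁ * Real.exp (S₂ * (a - b)) - S₂ * Real.exp (S₁ * (a - b)) = 0 := by
  have e1 : Real.exp (S₁ * a) = Real.exp (S₁ * (a - b)) * Real.exp (S₁ * b) := by
    rw [← Real.exp_add]; ring_nf
  have e2 : Real.exp (S₂ * a) = Real.exp (S₂ * (a - b)) * Real.exp (S₂ * b) := by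
    rw [← Real.exp_add]; ring_nf
  rw [e1, e2] at h2
  linear_combination (S₁ - S₂) * h2 + Real.exp (S₁ * (a - b)) * (S₂ * h1 - h3) -
    Real.exp (S₂ * (a - b)) * (S₁ * h1 - h3)
end
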